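/- arXiv:1207.5835 — 3 statements merged into one kernel-verified Lean document; each statement's English description precedes it below -/
import Mathlib

section
/- Let H be a Hilbert space and (h_n) a sequence with ‖h_n‖ ≤ 1. For j ≥ 1 let γ_j := limsup_{N→∞} |(1/N) ∑_{n=1}^N ⟨h_n, h_{n+j}⟩|. If (1/N) ∑_{j=1}^N γ_j → 0 as N → ∞, then the Cesàro means (1/N) ∑_{n=1}^N h_n converge to 0 in norm. -/
open Filter
open scoped InnerProductSpace

def HasDensity (S : Set ℕ) (d : ℝ) : Prop :=
  Tendsto (fun N : ℕ => (∑ k ∈ Finset.Icc 1 N, Set.indicator S (fun _ => (1 : ℝ)) k) / N)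
    atTop (nhds d)

/-!
Van der Corput's trick. Up to an error of `2J²`, `J • ∑_{n<N} h n` equals
`S = ∑_{n<N} ∑_{j<J} h (n + j)`, and Cauchy–Schwarz gives
`‖S‖² ≤ N ∑_{j,j'<J} ‖∑_{n<N} ⟪h (n + j), h (n + j')⟫‖`. Up to an error of `2J`, each inner sum
is the correlation sum of lag `|j - j'|`, and every lag occurs at most `2J` times, so
`‖∑_{n<N} h n‖ / N ≤ √(2/J · ∑_{d<J} ‖c_d(N)‖ / N + 2J/N) + 2J/N`.
For fixed `J` the right-hand side is eventually at most `√(2/J · (2 + ∑_{d≤J} γ_d)) + o(1)`,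
and this tends to `0` as `J → ∞` by the Cesàro hypothesis.
-/

open Finset Topology

lemma sum_Icc_one_eq_sum_range {M : Type*} [AddCommMonoid M] (f : ℕ → M) (N : ℕ) :
    ∑ n ∈ Icc 1 N, f n = ∑ n ∈ range N, f (n + 1) := by
  rw [range_eq_Ico, sum_Ico_add' f 0 N 1]
  rfl

lemma eventually_sum_le_sum_limsup_add {ι α : Type*} {l : Filter α} {u : ι → α → ℝ}
    (hu : ∀ i, IsBoundedUnder (· ≤ ·) l (u i)) (s : Finset ι) {δ : ℝ} (hδ : 0 < δ) :
    ∀ᶠ a in l, ∑ i ∈ s, u i a ≤ ∑ i ∈ s, (limsup (u i) l + δ) := by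
  have := (eventually_all_finset s).2 fun i _ =>
    eventually_lt_of_limsup_lt (lt_add_of_pos_right _ hδ) (hu i)
  exact this.mono fun a ha => sum_le_sum fun i hi => (ha i hi).le

lemma eventually_sum_range_le_two_add_sum_limsup {c : ℕ → ℕ → ℝ} (hc₀ : ∀ d N, 0 ≤ c d N)
    (hc₁ : ∀ d N, c d N ≤ 1) {J : ℕ} (hJ : 0 < J) :
    ∀ᶠ N in atTop, ∑ d ∈ range J, c d N ≤ 2 + ∑ d ∈ Icc 1 J, limsup (c d) atTop := by
  filter_upwards [eventually_sum_le_sum_limsup_add (u := fun d => c (d + 1))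
    (fun d => isBoundedUnder_of ⟨1, hc₁ (d + 1)⟩) (range J) (by positivity : (0 : ℝ) < 1 / J)]
    with N hN
  have hsum : ∑ d ∈ range J, (limsup (c (d + 1)) atTop + 1 / J)
      = ∑ d ∈ Icc 1 J, limsup (c d) atTop + 1 := by
    rw [sum_add_distrib, sum_Icc_one_eq_sum_range, sum_const, card_range, nsmul_eq_mul]
    field_simp
  calc ∑ d ∈ range J, c d N
      ≤ ∑ d ∈ range (J + 1), c d N :=
        sum_le_sum_of_subset_of_nonneg (range_subset_range.2 J.le_succ) fun d _ _ => hc₀ d N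
    _ = ∑ d ∈ range J, c (d + 1) N + c 0 N := sum_range_succ' _ _
    _ ≤ (∑ d ∈ Icc 1 J, limsup (c d) atTop + 1) + 1 := add_le_add (hN.trans hsum.le) (hc₁ 0 N)
    _ = 2 + ∑ d ∈ Icc 1 J, limsup (c d) atTop := by ring

lemma tendsto_zero_of_eventually_le_of_tendsto {α β : Type*} {l : Filter α} {l' : Filter β}
    [l'.NeBot] {a : α → ℝ} {u : β → α → ℝ} {v : β → ℝ} (ha : ∀ n, 0 ≤ a n)
    (hu : ∀ J, Tendsto (u J) l (𝓝 (v J))) (hv : Tendsto v l' (𝓝 0))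
    (hle : ∀ᶠ J in l', ∀ᶠ n in l, a n ≤ u J n) : Tendsto a l (𝓝 0) := by
  refine tendsto_order.2 ⟨fun b hb => .of_forall fun n => hb.trans_le (ha n), fun ε hε => ?_⟩
  obtain ⟨J, hJ, hJle⟩ := ((hv.eventually (gt_mem_nhds hε)).and hle).exists
  filter_upwards [(hu J).eventually (gt_mem_nhds hJ), hJle] with n hlt hle using hle.trans_lt hlt

lemma norm_sum_range_le_card_mul {E : Type*} [SeminormedAddCommGroup E] {g : ℕ → E} {C : ℝ}
    (hg : ∀ n, ‖g n‖ ≤ C) (N : ℕ) : ‖∑ n ∈ range N, g n‖ ≤ N * C := by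
  simpa using norm_sum_le_of_le (range N) fun n _ => hg n

lemma norm_sum_range_add_sub_le {E : Type*} [SeminormedAddCommGroup E] {g : ℕ → E} {C : ℝ}
    (hg : ∀ n, ‖g n‖ ≤ C) (N j : ℕ) :
    ‖∑ n ∈ range N, g (n + j) - ∑ n ∈ range N, g n‖ ≤ 2 * j * C := by
  have h₁ := sum_range_add g j N
  have h₂ := sum_range_add g N j
  rw [add_comm j N, h₂] at h₁
  have : ∑ n ∈ range N, g (n + j) - ∑ n ∈ range N, g n
      = ∑ n ∈ range j, g (N + n) - ∑ n ∈ range j, g n := by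
    simp only [add_comm _ j]
    rw [sub_eq_sub_iff_add_eq_add, add_comm (∑ n ∈ range N, g (j + n)),
      add_comm (∑ n ∈ range j, g (N + n))]
    exact h₁.symm
  rw [this]
  calc _ ≤ ‖∑ n ∈ range j, g (N + n)‖ + ‖∑ n ∈ range j, g n‖ := norm_sub_le _ _
    _ ≤ j * C + j * C :=
      add_le_add (norm_sum_range_le_card_mul (fun n => hg _) j) (norm_sum_range_le_card_mul hg j)
    _ = 2 * j * C := by ring

lemma sum_range_comp_dist_le {f : ℕ → ℝ} (hf : ∀ d, 0 ≤ f d) {j J : ℕ} (hj : j < J) :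
    ∑ i ∈ range J, f (Nat.dist j i) ≤ 2 * ∑ d ∈ range J, f d := by
  classical
  rw [sum_comp]
  have hfiber (d : ℕ) : #{i ∈ range J | Nat.dist j i = d} ≤ 2 := by
    refine (card_le_card (t := {j + d, j - d}) fun i hi => ?_).trans card_le_two
    have := (mem_filter.1 hi).2
    simp only [Nat.dist, mem_insert, mem_singleton] at this ⊢
    omega
  have himage : image (Nat.dist j) (range J) ⊆ range J := by
    intro d hd
    simp only [mem_image, mem_range, Nat.dist] at hd ⊢
    omega
  calc ∑ d ∈ image (Nat.dist j) (range J), #{i ∈ range J | Nat.dist j i = d} • f d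
      ≤ ∑ d ∈ image (Nat.dist j) (range J), 2 * f d := by
        gcongr with d
        rw [nsmul_eq_mul]
        exact mul_le_mul_of_nonneg_right (by exact_mod_cast hfiber d) (hf d)
    _ ≤ ∑ d ∈ range J, 2 * f d :=
        sum_le_sum_of_subset_of_nonneg himage fun d _ _ => by linarith [hf d]
    _ = 2 * ∑ d ∈ range J, f d := (mul_sum ..).symm

lemma norm_nsmul_sum_range_sub_sum_shift_le {E : Type*} [SeminormedAddCommGroup E] {x : ℕ → E}
    (hx : ∀ n, ‖x n‖ ≤ 1) (N J : ℕ) :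
    ‖J • ∑ n ∈ range N, x n - ∑ n ∈ range N, ∑ j ∈ range J, x (n + j)‖ ≤ 2 * J ^ 2 := by
  have hconst : J • ∑ n ∈ range N, x n = ∑ _j ∈ range J, ∑ n ∈ range N, x n := by
    rw [sum_const, card_range]
  rw [hconst, sum_comm (s := range N), ← sum_sub_distrib]
  calc _ ≤ ∑ j ∈ range J, 2 * (J : ℝ) := norm_sum_le_of_le _ fun j hj => by
        rw [norm_sub_rev]
        refine (norm_sum_range_add_sub_le hx N j).trans ?_
        have : (j : ℝ) ≤ J := by exact_mod_cast (mem_range.1 hj).le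
        linarith
    _ = 2 * J ^ 2 := by simp only [sum_const, card_range, nsmul_eq_mul]; ring

section InnerProduct

variable {𝕜 E : Type*} [RCLike 𝕜] [NormedAddCommGroup E] [InnerProductSpace 𝕜 E]

lemma sum_norm_sum_sq_le {κ ι : Type*} (t : Finset κ) (s : Finset ι) (y : κ → ι → E) :
    ∑ n ∈ t, ‖∑ i ∈ s, y n i‖ ^ 2 ≤ ∑ i ∈ s, ∑ i' ∈ s, ‖∑ n ∈ t, ⟪y n i, y n i'⟫_𝕜‖ := by
  calc ∑ n ∈ t, ‖∑ i ∈ s, y n i‖ ^ 2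
      = RCLike.re (∑ i ∈ s, ∑ i' ∈ s, ∑ n ∈ t, ⟪y n i, y n i'⟫_𝕜) := by
        simp only [@norm_sq_eq_re_inner 𝕜, sum_inner, inner_sum, ← map_sum]
        congr 1
        rw [sum_congr rfl fun n _ => sum_comm, sum_comm]
        exact sum_congr rfl fun i _ => sum_comm
    _ ≤ ‖∑ i ∈ s, ∑ i' ∈ s, ∑ n ∈ t, ⟪y n i, y n i'⟫_𝕜‖ := RCLike.re_le_norm _
    _ ≤ ∑ i ∈ s, ∑ i' ∈ s, ‖∑ n ∈ t, ⟪y n i, y n i'⟫_𝕜‖ :=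
        (norm_sum_le _ _).trans (sum_le_sum fun i _ => norm_sum_le _ _)

variable (𝕜) in
def correlationSum (x : ℕ → E) (d N : ℕ) : 𝕜 := ∑ n ∈ range N, ⟪x n, x (n + d)⟫_𝕜

variable {x : ℕ → E}

lemma norm_inner_le_one (hx : ∀ n, ‖x n‖ ≤ 1) (n m : ℕ) : ‖⟪x n, x m⟫_𝕜‖ ≤ 1 :=
  (norm_inner_le_norm _ _).trans (mul_le_one₀ (hx n) (norm_nonneg _) (hx m))

lemma norm_correlationSum_le (hx : ∀ n, ‖x n‖ ≤ 1) (d N : ℕ) :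
    ‖correlationSum 𝕜 x d N‖ ≤ N := by
  simpa [correlationSum] using
    norm_sum_range_le_card_mul (fun n => norm_inner_le_one (𝕜 := 𝕜) hx n (n + d)) N

lemma norm_sum_inner_shift_le (hx : ∀ n, ‖x n‖ ≤ 1) (N j j' : ℕ) :
    ‖∑ n ∈ range N, ⟪x (n + j), x (n + j')⟫_𝕜‖
      ≤ ‖correlationSum 𝕜 x (Nat.dist j j') N‖ + 2 * min j j' := by
  wlog hjj' : j ≤ j' generalizing j j'
  · have hsymm : ∑ n ∈ range N, ⟪x (n + j), x (n + j')⟫_𝕜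
        = starRingEnd 𝕜 (∑ n ∈ range N, ⟪x (n + j'), x (n + j)⟫_𝕜) := by
      simp only [map_sum, inner_conj_symm]
    rw [hsymm, RCLike.norm_conj, Nat.dist_comm, min_comm]
    exact this j' j (le_of_not_ge hjj')
  obtain ⟨d, rfl⟩ := Nat.exists_eq_add_of_le hjj'
  have hshift := norm_sum_range_add_sub_le
    (fun m => norm_inner_le_one (𝕜 := 𝕜) hx m (m + d)) N j
  rw [Nat.dist_eq_sub_of_le hjj', Nat.add_sub_cancel_left, min_eq_left hjj']
  simp only [← add_assoc, mul_one] at hshift ⊢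
  exact (norm_le_norm_add_norm_sub' _ (correlationSum 𝕜 x d N)).trans (add_le_add le_rfl hshift)

lemma norm_sum_shift_sq_le (hx : ∀ n, ‖x n‖ ≤ 1) (N J : ℕ) :
    ‖∑ n ∈ range N, ∑ j ∈ range J, x (n + j)‖ ^ 2
      ≤ N * (2 * J * ∑ d ∈ range J, ‖correlationSum 𝕜 x d N‖ + 2 * J ^ 3) := by
  have hrow : ∀ j ∈ range J, ∑ j' ∈ range J, (‖correlationSum 𝕜 x (Nat.dist j j') N‖ + 2 * J)
      ≤ 2 * ∑ d ∈ range J, ‖correlationSum 𝕜 x d N‖ + 2 * J ^ 2 := fun j hj => by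
    rw [sum_add_distrib, sum_const, card_range, nsmul_eq_mul]
    have := sum_range_comp_dist_le (fun d => norm_nonneg (correlationSum 𝕜 x d N)) (mem_range.1 hj)
    linarith
  calc ‖∑ n ∈ range N, ∑ j ∈ range J, x (n + j)‖ ^ 2
      ≤ (∑ n ∈ range N, ‖∑ j ∈ range J, x (n + j)‖) ^ 2 := by gcongr; exact norm_sum_le _ _
    _ ≤ N * ∑ n ∈ range N, ‖∑ j ∈ range J, x (n + j)‖ ^ 2 := by
        simpa using sq_sum_le_card_mul_sum_sq (s := range N)
          (f := fun n => ‖∑ j ∈ range J, x (n + j)‖)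
    _ ≤ N * ∑ j ∈ range J, ∑ j' ∈ range J, ‖∑ n ∈ range N, ⟪x (n + j), x (n + j')⟫_𝕜‖ := by
        gcongr; exact sum_norm_sum_sq_le _ _ _
    _ ≤ N * ∑ j ∈ range J, ∑ j' ∈ range J, (‖correlationSum 𝕜 x (Nat.dist j j') N‖ + 2 * J) := by
        gcongr with j hj j' hj'
        refine (norm_sum_inner_shift_le hx N j j').trans ?_
        have : ((min j j' : ℕ) : ℝ) ≤ J := by
          exact_mod_cast (min_le_left j j').trans (mem_range.1 hj).le
        linarith
    _ ≤ N * ∑ j ∈ range J, (2 * ∑ d ∈ range J, ‖correlationSum 𝕜 x d N‖ + 2 * J ^ 2) := by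
        gcongr with j hj; exact hrow j hj
    _ = N * (2 * J * ∑ d ∈ range J, ‖correlationSum 𝕜 x d N‖ + 2 * J ^ 3) := by
        rw [sum_const, card_range, nsmul_eq_mul]; ring

lemma norm_sum_range_div_le (hx : ∀ n, ‖x n‖ ≤ 1) {J : ℕ} (hJ : 0 < J) (N : ℕ) :
    ‖∑ n ∈ range N, x n‖ / N
      ≤ √(2 / J * ∑ d ∈ range J, ‖correlationSum 𝕜 x d N‖ / N + 2 * J / N) + 2 * J / N := by
  rcases N.eq_zero_or_pos with rfl | hN
  · simp only [CharP.cast_eq_zero, div_zero]; positivity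
  set W := ∑ n ∈ range N, x n
  set S := ∑ n ∈ range N, ∑ j ∈ range J, x (n + j)
  have hJN : (0 : ℝ) < J * N := by positivity
  have hW : J * ‖W‖ ≤ ‖S‖ + 2 * J ^ 2 := by
    have := norm_le_norm_add_norm_sub' (J • W) S
    rw [RCLike.norm_nsmul 𝕜, nsmul_eq_mul] at this
    linarith [norm_nsmul_sum_range_sub_sum_shift_le hx N J]
  have hS : ‖S‖ / (J * N)
      ≤ √(2 / J * ∑ d ∈ range J, ‖correlationSum 𝕜 x d N‖ / N + 2 * J / N) := by
    refine Real.le_sqrt_of_sq_le ?_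
    calc (‖S‖ / (J * N)) ^ 2 = ‖S‖ ^ 2 / (J * N) ^ 2 := div_pow ..
      _ ≤ N * (2 * J * ∑ d ∈ range J, ‖correlationSum 𝕜 x d N‖ + 2 * J ^ 3) / (J * N) ^ 2 := by
          gcongr; exact norm_sum_shift_sq_le hx N J
      _ = _ := by rw [← sum_div]; field_simp
  calc ‖W‖ / N = J * ‖W‖ / (J * N) := by field_simp
    _ ≤ (‖S‖ + 2 * J ^ 2) / (J * N) := by gcongr
    _ = ‖S‖ / (J * N) + 2 * J / N := by field_simp
    _ ≤ _ := by gcongr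

end InnerProduct

theorem stmt5_general {H : Type*} [NormedAddCommGroup H] [InnerProductSpace ℂ H]
    (h : ℕ → H) (hbd : ∀ n, ‖h n‖ ≤ 1)
    (γ : ℕ → ℝ)
    (hγ : ∀ j, 1 ≤ j →
      γ j = Filter.limsup
        (fun N : ℕ => ‖(∑ n ∈ Finset.Icc 1 N, ⟪h n, h (n + j)⟫_ℂ) / N‖) atTop)
    (hces : Tendsto (fun N : ℕ => (∑ j ∈ Finset.Icc 1 N, γ j) / N) atTop (nhds 0)) :
    Tendsto (fun N : ℕ => (N : ℝ)⁻¹ • ∑ n ∈ Finset.Icc 1 N, h n) atTop (nhds 0) := by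
  set x : ℕ → H := fun n => h (n + 1)
  have hx : ∀ n, ‖x n‖ ≤ 1 := fun n => hbd (n + 1)
  set c : ℕ → ℕ → ℝ := fun d N => ‖correlationSum ℂ x d N‖ / N
  have hsumγ (J : ℕ) : ∑ d ∈ Icc 1 J, limsup (c d) atTop = ∑ j ∈ Icc 1 J, γ j := by
    refine sum_congr rfl fun d hd => ?_
    rw [hγ d (mem_Icc.1 hd).1]
    congr! 2 with N
    rw [norm_div, Complex.norm_natCast, sum_Icc_one_eq_sum_range]
    simp only [add_right_comm]
    rfl
  rw [tendsto_zero_iff_norm_tendsto_zero]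
  refine tendsto_zero_of_eventually_le_of_tendsto (l' := atTop) (fun N => norm_nonneg _)
    (u := fun J N => √(2 / J * (2 + ∑ j ∈ Icc 1 J, γ j) + 2 * J / N) + 2 * J / N)
    (v := fun J => √(2 / J * (2 + ∑ j ∈ Icc 1 J, γ j))) (fun J => ?_) ?_ ?_
  · have := tendsto_const_div_atTop_nhds_zero_nat (2 * J : ℝ)
    simpa using ((tendsto_const_nhds.add this).sqrt).add this
  · have := (tendsto_const_div_atTop_nhds_zero_nat 4).add (hces.const_mul 2)
    rw [zero_add, mul_zero] at this
    simpa using (this.congr fun J => by ring).sqrt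
  · filter_upwards [eventually_gt_atTop 0] with J hJ
    filter_upwards [eventually_sum_range_le_two_add_sum_limsup
      (fun d N => div_nonneg (norm_nonneg _) N.cast_nonneg)
      (fun d N => div_le_one_of_le₀ (norm_correlationSum_le (𝕜 := ℂ) hx d N) N.cast_nonneg) hJ]
      with N hN
    rw [hsumγ] at hN
    rw [norm_smul, norm_inv, Real.norm_natCast, sum_Icc_one_eq_sum_range, inv_mul_eq_div]
    refine (norm_sum_range_div_le (𝕜 := ℂ) hx hJ N).trans ?_
    gcongr

/-- van der Corput lemma: if the Cesàro averages of $\gamma_j$ tend to 0, then the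
Cesàro means of the sequence converge to 0 in norm. -/
theorem stmt5 {H : Type*} [NormedAddCommGroup H] [InnerProductSpace ℂ H] [CompleteSpace H]
    (h : ℕ → H) (hbd : ∀ n, ‖h n‖ ≤ 1)
    (γ : ℕ → ℝ)
    (hγ : ∀ j, 1 ≤ j →
      γ j = Filter.limsup
        (fun N : ℕ => ‖(∑ n ∈ Finset.Icc 1 N, ⟪h n, h (n + j)⟫_ℂ) / N‖) atTop)
    (hces : Tendsto (fun N : ℕ => (∑ j ∈ Finset.Icc 1 N, γ j) / N) atTop (nhds 0)) :
    Tendsto (fun N : ℕ => (N : ℝ)⁻¹ • ∑ n ∈ Finset.Icc 1 N, h n) atTop (nhds 0) :=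
  stmt5_general h hbd γ hγ hces
end

section
/- Let T be a power-bounded operator on a separable Banach space X such that for every x ∈ X the orbit (T^n x) converges weakly to 0 along some set of indices of density 1 (possibly depending on x). Then there exists a single set of indices (n_j) of density 1 such that T^{n_j} → 0 in the weak operator topology, i.e., T^{n_j} x → 0 weakly for every x ∈ X simultaneously. -/
open Filter

/-!
Fix a dense sequence `(uᵢ)` in `X` and density-one sets `Sᵢ` along which the orbit of `uᵢ`
tends weakly to `0`. A diagonal argument gives one density-one set `S` with `S \ Sᵢ` finite for
every `i`: take thresholds `N₀ < N₁ < ⋯` beyond which `S₀ ∩ ⋯ ∩ Sₘ` has relative density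
`> 1 - 1/(m+1)`, and keep `n` iff `n ∈ Sₘ` for every `m` with `Nₘ < n`. Along `S` the orbit of
every `uᵢ` tends weakly to `0`, and since the maps `f ∘ Tⁿ` are uniformly bounded, hence
equicontinuous, the set of `x` whose orbit does so is closed, so it is all of `X`.
-/

open Topology Set

noncomputable def partialDensity (S : Set ℕ) (n : ℕ) : ℝ :=
  (∑ k ∈ Finset.Icc 1 n, S.indicator (fun _ => (1 : ℝ)) k) / n

lemma hasDensity_iff_tendsto_partialDensity {S : Set ℕ} {d : ℝ} :
    HasDensity S d ↔ Tendsto (partialDensity S) atTop (𝓝 d) :=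
  Iff.rfl

lemma partialDensity_le_one (S : Set ℕ) (n : ℕ) : partialDensity S n ≤ 1 := by
  refine div_le_one_of_le₀ ?_ n.cast_nonneg
  calc (∑ k ∈ Finset.Icc 1 n, S.indicator (fun _ => (1 : ℝ)) k)
      ≤ ∑ _k ∈ Finset.Icc 1 n, (1 : ℝ) :=
        Finset.sum_le_sum fun k _ => indicator_le_self' (fun _ _ => zero_le_one) k
    _ = n := by simp

lemma partialDensity_mono {S T : Set ℕ} {n : ℕ}
    (h : ∀ k ∈ Finset.Icc 1 n, k ∈ S → k ∈ T) :
    partialDensity S n ≤ partialDensity T n := by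
  refine div_le_div_of_nonneg_right (Finset.sum_le_sum fun k hk => ?_) n.cast_nonneg
  by_cases hkS : k ∈ S
  · simp [hkS, h k hk hkS]
  · simp [hkS, indicator_nonneg]

lemma partialDensity_add_sub_one_le_inter (S T : Set ℕ) (n : ℕ) :
    partialDensity S n + partialDensity T n - 1 ≤ partialDensity (S ∩ T) n := by
  have hpoint : ∀ k, S.indicator (fun _ => (1 : ℝ)) k + T.indicator (fun _ => 1) k - 1
      ≤ (S ∩ T).indicator (fun _ => 1) k := by
    intro k
    by_cases hS : k ∈ S <;> by_cases hT : k ∈ T <;> simp [hS, hT]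
  have hsum := Finset.sum_le_sum fun k (_ : k ∈ Finset.Icc 1 n) => hpoint k
  rw [Finset.sum_sub_distrib, Finset.sum_add_distrib] at hsum
  calc partialDensity S n + partialDensity T n - 1
      ≤ partialDensity S n + partialDensity T n - (n : ℝ) / n := by
        gcongr; exact div_self_le_one _
    _ ≤ partialDensity (S ∩ T) n := by
        unfold partialDensity
        rw [← add_div, ← sub_div]
        gcongr
        simpa using hsum

lemma HasDensity.inter {S T : Set ℕ} (hS : HasDensity S 1) (hT : HasDensity T 1) :
    HasDensity (S ∩ T) 1 := by
  rw [hasDensity_iff_tendsto_partialDensity] at *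
  have hlower : Tendsto (fun n => partialDensity S n + partialDensity T n - 1) atTop (𝓝 1) := by
    simpa using (hS.add hT).sub_const 1
  exact tendsto_of_tendsto_of_tendsto_of_le_of_le hlower tendsto_const_nhds
    (partialDensity_add_sub_one_le_inter S T) (partialDensity_le_one _)

lemma hasDensity_biInter_le {S : ℕ → Set ℕ} (hS : ∀ i, HasDensity (S i) 1) (m : ℕ) :
    HasDensity (⋂ i ≤ m, S i) 1 := by
  induction m with
  | zero => simpa using hS 0
  | succ m ih => simpa [biInter_le_succ] using ih.inter (hS (m + 1))

lemma StrictMono.exists_le_lt_succ {N : ℕ → ℕ} (hN : StrictMono N) {K n : ℕ} (h : N K ≤ n) :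
    ∃ k, K ≤ k ∧ N k ≤ n ∧ n < N (k + 1) := by
  have hn : n ∈ Ico (N (K + 0)) (N (K + (n + 1))) :=
    ⟨h, (Nat.lt_succ_self n).trans_le ((Nat.le_add_left _ K).trans (hN.le_apply))⟩
  obtain ⟨i, -, hi⟩ := mem_iUnion₂.1 (Ico_subset_biUnion_Ico (n + 1) (fun i => N (K + i)) hn)
  exact ⟨K + i, Nat.le_add_right K i, hi.1, hi.2⟩

lemma Antitone.exists_hasDensity_one_inf_principal_le {I : ℕ → Set ℕ} (hI : Antitone I)
    (hd : ∀ m, HasDensity (I m) 1) :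
    ∃ S, HasDensity S 1 ∧ ∀ m, atTop ⊓ 𝓟 S ≤ 𝓟 (I m) := by
  have hthreshold (m : ℕ) :
      ∀ᶠ N in atTop, ∀ n ≥ N, 1 - 1 / (m + 1 : ℝ) < partialDensity (I m) n :=
    eventually_forall_ge_atTop.2 <|
      (hd m).eventually (eventually_gt_nhds (sub_lt_self 1 (by positivity)))
  obtain ⟨N, hN, hNI⟩ := extraction_forall_of_eventually hthreshold
  set S := {n | ∀ m, N m < n → n ∈ I m}
  have hIS {k n : ℕ} (hn : n < N (k + 1)) : partialDensity (I k) n ≤ partialDensity S n :=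
    partialDensity_mono fun j hj hjk m hmj => hI (Nat.lt_succ_iff.1 <|
      hN.lt_iff_lt.1 <| hmj.trans <| (Finset.mem_Icc.1 hj).2.trans_lt hn) hjk
  refine ⟨S, tendsto_order.2 ⟨fun a ha => ?_, fun a ha => ?_⟩, fun m => ?_⟩
  · obtain ⟨K, hK⟩ := exists_nat_one_div_lt (sub_pos.2 ha)
    filter_upwards [eventually_ge_atTop (N K)] with n hn
    obtain ⟨k, hKk, hkn, hnk⟩ := hN.exists_le_lt_succ hn
    calc a < 1 - 1 / (K + 1 : ℝ) := by linarith
      _ ≤ 1 - 1 / (k + 1 : ℝ) := by gcongr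
      _ < partialDensity (I k) n := hNI k n hkn
      _ ≤ partialDensity S n := hIS hnk
  · exact Eventually.of_forall fun n => (partialDensity_le_one S n).trans_lt ha
  · exact le_principal_iff.2 <| mem_inf_principal.2 <|
      (eventually_gt_atTop (N m)).mono fun n hn hnS => hnS m hn

lemma exists_hasDensity_one_inf_principal_le (S : ℕ → Set ℕ) (hS : ∀ i, HasDensity (S i) 1) :
    ∃ S', HasDensity S' 1 ∧ ∀ i, atTop ⊓ 𝓟 S' ≤ atTop ⊓ 𝓟 (S i) := by
  have hanti : Antitone fun m => ⋂ i ≤ m, S i :=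
    fun m m' hm => biInter_mono (fun i hi => le_trans hi hm) fun _ _ => le_rfl
  obtain ⟨S', hS', hle⟩ := hanti.exists_hasDensity_one_inf_principal_le (hasDensity_biInter_le hS)
  exact ⟨S', hS', fun i => le_inf inf_le_left <|
    (hle i).trans (principal_mono.2 fun n hn => mem_iInter₂.1 hn i le_rfl)⟩

lemma ContinuousLinearMap.isClosed_setOf_tendsto_zero_of_norm_le {𝕜 𝕜₂ E F ι : Type*}
    [NontriviallyNormedField 𝕜] [NontriviallyNormedField 𝕜₂] {σ₁₂ : 𝕜 →+* 𝕜₂}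
    [RingHomIsometric σ₁₂] [SeminormedAddCommGroup E] [SeminormedAddCommGroup F]
    [NormedSpace 𝕜 E] [NormedSpace 𝕜₂ F] (g : ι → E →SL[σ₁₂] F) (hg : ∃ C, ∀ i, ‖g i‖ ≤ C)
    (l : Filter ι) : IsClosed {x | Tendsto (fun i => g i x) l (𝓝 0)} :=
  Equicontinuous.isClosed_setOfPred_tendsto
    (((NormedSpace.equicontinuous_TFAE g).out 5 1).1 hg) continuous_const

theorem stmt13_general {X : Type*} [NormedAddCommGroup X] [NormedSpace ℝ X]
    [TopologicalSpace.SeparableSpace X]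
    (T : X →L[ℝ] X) (hpb : ∃ C : ℝ, ∀ n : ℕ, ‖T ^ n‖ ≤ C)
    (haws : ∀ x : X, ∃ S : Set ℕ, HasDensity S 1 ∧
      ∀ f : X →L[ℝ] ℝ, Tendsto (fun n : ℕ => f ((T ^ n) x)) (atTop ⊓ Filter.principal S)
        (nhds 0)) :
    ∃ S : Set ℕ, HasDensity S 1 ∧
      ∀ x : X, ∀ f : X →L[ℝ] ℝ,
        Tendsto (fun n : ℕ => f ((T ^ n) x)) (atTop ⊓ Filter.principal S) (nhds 0) := by
  obtain ⟨C, hC⟩ := hpb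
  choose S hS hconv using fun i => haws (TopologicalSpace.denseSeq X i)
  obtain ⟨S', hS', hS'S⟩ := exists_hasDensity_one_inf_principal_le S hS
  refine ⟨S', hS', fun x => (TopologicalSpace.denseRange_denseSeq X).induction_on x ?_
    fun i f => (hconv i f).mono_left (hS'S i)⟩
  simp only [ofPred_forall]
  exact isClosed_iInter fun f =>
    ContinuousLinearMap.isClosed_setOf_tendsto_zero_of_norm_le (fun n => f.comp (T ^ n))
      ⟨‖f‖ * C, fun n => (f.opNorm_comp_le _).trans (by gcongr; exact hC n)⟩ _

/-- For a power-bounded operator on a separable Banach space whose every orbit converges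
weakly to 0 along some density-1 set, there is a single density-1 set along which the
powers converge to 0 in the weak operator topology. -/
theorem stmt13 {X : Type*} [NormedAddCommGroup X] [NormedSpace ℝ X] [CompleteSpace X]
    [TopologicalSpace.SeparableSpace X]
    (T : X →L[ℝ] X) (hpb : ∃ C : ℝ, ∀ n : ℕ, ‖T ^ n‖ ≤ C)
    (haws : ∀ x : X, ∃ S : Set ℕ, HasDensity S 1 ∧
      ∀ f : X →L[ℝ] ℝ, Tendsto (fun n : ℕ => f ((T ^ n) x)) (atTop ⊓ Filter.principal S)
        (nhds 0)) :
    ∃ S : Set ℕ, HasDensity S 1 ∧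
      ∀ x : X, ∀ f : X →L[ℝ] ℝ,
        Tendsto (fun n : ℕ => f ((T ^ n) x)) (atTop ⊓ Filter.principal S) (nhds 0) :=
  stmt13_general T hpb haws
end

section
/- Let U be a unitary operator on a Hilbert space H with no eigenvalues on the unit circle (i.e., no nonzero h ∈ H and λ ∈ ℂ with |λ| = 1 satisfy Uh = λh). Then for every h ∈ H the orbit (U^n h) converges weakly to 0 along a set of indices of density 1. -/
/-!
For `‖z‖ = 1` the mean ergodic theorem for `z • U` makes the exponential sums
`s_L(z) = ∑_{n<L} zⁿ Uⁿ h` of size `o(L)`; since `L ↦ ‖s_L(z)‖` is subadditive and the circle is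
compact, this holds uniformly in `z`. At the `4N`-th roots of unity, discrete Parseval gives
`∑_j ‖s_{2N}(ζʲ)‖² = 4N · 2N ‖h‖²` and, applied to the polynomial `z^{2N} ‖s_{2N}(z)‖²`,
`∑_j ‖s_{2N}(ζʲ)‖⁴ ≥ 4N · N² ∑_{r<N} |⟪h, Uʳ h⟫|²`. Hence `|⟪h, Uʳ h⟫|²` has Cesàro mean `0`
(Wiener), and by stationarity so has `n ↦ |⟪Uᵐ h, Uⁿ h⟫|²` for every `m`. A diagonal
(Koopman–von Neumann) argument yields one set of density `1` along which all of these tend to `0`;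
the orbit is then weakly null along it on the closed span of the orbit, and trivially so on the
orthogonal complement.
-/

open Filter
open scoped InnerProductSpace

open Finset Topology

lemma hasDensity_one_of_compl {S : Set ℕ} (h : HasDensity Sᶜ 0) : HasDensity S 1 := by
  have hsplit : ∀ N : ℕ, 1 ≤ N →
      (∑ k ∈ Icc 1 N, Sᶜ.indicator (fun _ => (1 : ℝ)) k) / N =
        1 - (∑ k ∈ Icc 1 N, S.indicator (fun _ => (1 : ℝ)) k) / N := by
    intro N hN
    have hsum : ∑ k ∈ Icc 1 N, (S.indicator (fun _ => (1 : ℝ)) k +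
        Sᶜ.indicator (fun _ => (1 : ℝ)) k) = N := by
      simp [Set.indicator_self_add_compl_apply]
    rw [sum_add_distrib] at hsum
    field_simp
    linarith
  have := h.const_sub 1
  rw [sub_zero] at this
  refine this.congr' ((eventually_ge_atTop 1).mono fun N hN => ?_)
  rw [hsplit N hN, sub_sub_cancel]

lemma hasDensity_zero_setOf_lt {a : ℕ → ℝ} (ha : ∀ n, 0 ≤ a n)
    (hces : Tendsto (fun N : ℕ => (∑ k ∈ range N, a k) / N) atTop (𝓝 0)) {ε : ℝ} (hε : 0 < ε) :
    HasDensity {n | ε < a n} 0 := by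
  have hbound : ∀ N : ℕ, 1 ≤ N →
      (∑ k ∈ Icc 1 N, {n | ε < a n}.indicator (fun _ => (1 : ℝ)) k) / N ≤
        2 * ε⁻¹ * ((∑ k ∈ range (N + 1), a k) / ↑(N + 1)) := by
    intro N hN
    have hmarkov : ∑ k ∈ Icc 1 N, {n | ε < a n}.indicator (fun _ => (1 : ℝ)) k ≤
        ε⁻¹ * ∑ k ∈ range (N + 1), a k := by
      rw [mul_sum]
      refine (sum_le_sum fun k _ => ?_).trans
        (sum_le_sum_of_subset_of_nonneg (fun k hk => ?_) fun k _ _ =>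
          mul_nonneg (by positivity) (ha k))
      · by_cases hk : ε < a k
        · simp [hk, le_inv_mul_iff₀ hε, hk.le]
        · simpa [hk] using mul_nonneg (inv_nonneg.2 hε.le) (ha k)
      · simp only [mem_Icc, mem_range] at hk ⊢; omega
    have hN' : (1 : ℝ) ≤ N := by exact_mod_cast hN
    have hc : 0 ≤ ε⁻¹ * ∑ k ∈ range (N + 1), a k :=
      mul_nonneg (by positivity) (sum_nonneg fun k _ => ha k)
    calc (∑ k ∈ Icc 1 N, {n | ε < a n}.indicator (fun _ => (1 : ℝ)) k) / N
        ≤ ε⁻¹ * (∑ k ∈ range (N + 1), a k) / N := by gcongr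
      _ ≤ 2 * (ε⁻¹ * ∑ k ∈ range (N + 1), a k) / (N + 1) := by
        rw [div_le_div_iff₀ (by positivity) (by positivity)]
        nlinarith
      _ = 2 * ε⁻¹ * ((∑ k ∈ range (N + 1), a k) / ↑(N + 1)) := by push_cast; ring
  have hlim := (hces.comp (tendsto_add_atTop_nat 1)).const_mul (2 * ε⁻¹)
  rw [mul_zero] at hlim
  exact squeeze_zero' (Eventually.of_forall fun N => div_nonneg
      (sum_nonneg fun k _ => Set.indicator_nonneg (fun _ _ => zero_le_one) k) N.cast_nonneg)
    ((eventually_ge_atTop 1).mono hbound) hlim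

lemma exists_hasDensity_one_inter_finite {E : ℕ → Set ℕ} (hmono : Monotone E)
    (hE : ∀ m, HasDensity (E m) 0) :
    ∃ S : Set ℕ, HasDensity S 1 ∧ ∀ m, (S ∩ E m).Finite := by
  have hev : ∀ m : ℕ, ∀ᶠ k in atTop, ∀ N, k ≤ N →
      (∑ i ∈ Icc 1 N, (E m).indicator (fun _ => (1 : ℝ)) i) / N ≤ 1 / (m + 1) :=
    fun m => eventually_forall_ge_atTop.2 ((hE m).eventually (eventually_le_nhds (by positivity)))
  obtain ⟨T, hT, hTE⟩ := extraction_forall_of_eventually hev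
  set S : Set ℕ := {n | ∀ j, T j ≤ n → n ∉ E j}
  have hcompl : ∀ m N, T m ≤ N →
      (∑ i ∈ Icc 1 N, Sᶜ.indicator (fun _ => (1 : ℝ)) i) / N ≤ 1 / (m + 1) := by
    intro m N hN
    set J := Nat.findGreatest (fun j => T j ≤ N) N
    have hJ : T J ≤ N := Nat.findGreatest_spec (P := fun j => T j ≤ N) ((hT.id_le m).trans hN) hN
    have hmJ : m ≤ J := Nat.le_findGreatest ((hT.id_le m).trans hN) hN
    have hsub : ∀ i ∈ Icc 1 N, Sᶜ.indicator (fun _ => (1 : ℝ)) i ≤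
        (E J).indicator (fun _ => (1 : ℝ)) i := by
      intro i hi
      by_cases hiS : i ∈ S
      · simp [hiS, Set.indicator_nonneg]
      · simp only [S, Set.mem_ofPred_eq, not_forall, not_not] at hiS
        obtain ⟨j, hj, hij⟩ := hiS
        have hjJ : j ≤ J :=
          Nat.le_findGreatest ((hT.id_le j).trans (hj.trans (mem_Icc.1 hi).2))
            (hj.trans (mem_Icc.1 hi).2)
        rw [Set.indicator_of_mem (hmono hjJ hij)]
        exact Set.indicator_le_self' (fun _ _ => zero_le_one) i
    calc (∑ i ∈ Icc 1 N, Sᶜ.indicator (fun _ => (1 : ℝ)) i) / N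
        ≤ (∑ i ∈ Icc 1 N, (E J).indicator (fun _ => (1 : ℝ)) i) / N :=
          div_le_div_of_nonneg_right (sum_le_sum hsub) N.cast_nonneg
      _ ≤ 1 / (J + 1) := hTE J N hJ
      _ ≤ 1 / (m + 1) := by gcongr
  refine ⟨S, hasDensity_one_of_compl ?_, fun m => ?_⟩
  · refine tendsto_order.2 ⟨fun a ha => Eventually.of_forall fun N => ha.trans_le ?_,
      fun a ha => ?_⟩
    · exact div_nonneg (sum_nonneg fun i _ => Set.indicator_nonneg (fun _ _ => zero_le_one) i)
        N.cast_nonneg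
    · obtain ⟨m, hm⟩ := exists_nat_one_div_lt ha
      exact (eventually_ge_atTop (T m)).mono fun N hN => (hcompl m N hN).trans_lt hm
  · exact (Set.finite_Iio (T m)).subset fun n hn => lt_of_not_ge fun h => hn.1 m h hn.2

lemma tendsto_cesaro_of_shift {a b : ℕ → ℝ} (m : ℕ) (hb : ∀ k, 0 ≤ b k)
    (hab : ∀ k, b (m + k) = a k)
    (ha : Tendsto (fun N : ℕ => (∑ k ∈ range N, a k) / N) atTop (𝓝 0)) :
    Tendsto (fun N : ℕ => (∑ k ∈ range N, b k) / N) atTop (𝓝 0) := by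
  have hle : ∀ N, ∑ k ∈ range N, b k ≤ ∑ k ∈ range m, b k + ∑ k ∈ range N, a k := fun N =>
    calc ∑ k ∈ range N, b k ≤ ∑ k ∈ range (m + N), b k :=
          sum_le_sum_of_subset_of_nonneg (range_subset_range.2 (by omega)) fun k _ _ => hb k
      _ = ∑ k ∈ range m, b k + ∑ k ∈ range N, a k := by simp only [sum_range_add, hab]
  have hlim := (tendsto_const_div_atTop_nhds_zero_nat (∑ k ∈ range m, b k)).add ha
  rw [zero_add] at hlim
  refine squeeze_zero (fun N => div_nonneg (sum_nonneg fun k _ => hb k) N.cast_nonneg)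
    (fun N => ?_) hlim
  rw [← add_div]
  exact div_le_div_of_nonneg_right (hle N) N.cast_nonneg

theorem exists_hasDensity_one_tendsto_zero {b : ℕ → ℕ → ℝ} (hb : ∀ m n, 0 ≤ b m n)
    (hces : ∀ m, Tendsto (fun N : ℕ => (∑ k ∈ range N, b m k) / N) atTop (𝓝 0)) :
    ∃ S : Set ℕ, HasDensity S 1 ∧ ∀ m, Tendsto (b m) (atTop ⊓ 𝓟 S) (𝓝 0) := by
  set E : ℕ → Set ℕ := fun m => {n | 1 / (m + 1) < ∑ i ∈ range (m + 1), b i n}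
  have hmono : Monotone E := by
    intro m m' hm n hn
    calc 1 / ((m' : ℝ) + 1) ≤ 1 / (m + 1) := by gcongr
      _ < ∑ i ∈ range (m + 1), b i n := hn
      _ ≤ ∑ i ∈ range (m' + 1), b i n :=
        sum_le_sum_of_subset_of_nonneg (range_subset_range.2 (by omega)) fun i _ _ => hb i n
  have hE : ∀ m, HasDensity (E m) 0 := by
    intro m
    refine hasDensity_zero_setOf_lt (fun n => sum_nonneg fun i _ => hb i n) ?_ (by positivity)
    have := tendsto_finsetSum (range (m + 1)) fun i _ => hces i
    simp only [sum_const_zero] at this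
    refine this.congr fun N => ?_
    rw [sum_comm, sum_div]
  obtain ⟨S, hS, hfin⟩ := exists_hasDensity_one_inter_finite hmono hE
  refine ⟨S, hS, fun i => tendsto_order.2 ⟨fun a ha => Eventually.of_forall fun n =>
    ha.trans_le (hb i n), fun a ha => ?_⟩⟩
  obtain ⟨m, hm⟩ := exists_nat_one_div_lt ha
  have hm' : 1 / ((max m i : ℕ) + 1 : ℝ) < a :=
    lt_of_le_of_lt (by gcongr; exact le_max_left m i) hm
  rw [eventually_inf_principal]
  filter_upwards [Nat.cofinite_eq_atTop ▸ (hfin (max m i)).eventually_cofinite_notMem]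
    with n hn hnS
  calc b i n ≤ ∑ j ∈ range (max m i + 1), b j n :=
        single_le_sum (fun j _ => hb j n) (mem_range.2 (by omega))
    _ ≤ 1 / ((max m i : ℕ) + 1 : ℝ) := not_lt.1 fun h => hn ⟨hnS, h⟩
    _ < a := hm'

section WeakNull

variable {𝕜 E ι : Type*} [RCLike 𝕜] [NormedAddCommGroup E] [InnerProductSpace 𝕜 E]

theorem tendsto_inner_zero_of_tendsto_inner_self [CompleteSpace E] {x : ι → E} {l : Filter ι}
    {C : ℝ} (hx : ∀ i, ‖x i‖ ≤ C) (h : ∀ j, Tendsto (fun i => ⟪x j, x i⟫_𝕜) l (𝓝 0)) (y : E) :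
    Tendsto (fun i => ⟪y, x i⟫_𝕜) l (𝓝 0) := by
  let W : Submodule 𝕜 E :=
    { carrier := {y | Tendsto (fun i => ⟪y, x i⟫_𝕜) l (𝓝 0)}
      add_mem' := fun hu hv => by simpa [inner_add_left] using hu.add hv
      zero_mem' := by simp [tendsto_const_nhds]
      smul_mem' := fun c u hu => by simpa [inner_smul_left] using hu.const_mul _ }
  have hequi : Equicontinuous fun i y => ⟪y, x i⟫_𝕜 := by
    refine (LipschitzWith.uniformEquicontinuous _ C.toNNReal fun i =>
      LipschitzWith.of_dist_le_mul fun y y' => ?_).equicontinuous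
    rw [dist_eq_norm, ← inner_sub_left, dist_eq_norm, Real.coe_toNNReal', mul_comm]
    exact (norm_inner_le_norm _ _).trans
      (mul_le_mul_of_nonneg_left ((hx i).trans (le_max_left _ _)) (norm_nonneg _))
  have hW : IsClosed (W : Set E) := hequi.isClosed_setOfPred_tendsto continuous_const
  set K := Submodule.span 𝕜 (Set.range x)
  have hKW : K.topologicalClosure ≤ W :=
    K.topologicalClosure_minimal (Submodule.span_le.2 (Set.range_subset_iff.2 h)) hW
  obtain ⟨u, hu, v, hv, rfl⟩ := K.topologicalClosure.exists_add_mem_mem_orthogonal y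
  refine W.add_mem (hKW hu) ?_
  have hxK : ∀ i, x i ∈ K.topologicalClosure := fun i =>
    K.le_topologicalClosure (Submodule.subset_span (Set.mem_range_self i))
  show Tendsto _ _ _
  simpa [Submodule.inner_left_of_mem_orthogonal (hxK _) hv] using
    (tendsto_const_nhds : Tendsto (fun _ => (0 : 𝕜)) l (𝓝 0))

end WeakNull

section UniformSubadditive

variable {X : Type*} [TopologicalSpace X] {f : X → ℕ → ℝ}

lemma eventually_le_mul_nhds_of_subadditive (hcont : ∀ L, Continuous fun x => f x L)
    (hsub : ∀ x, Subadditive (f x)) {x : X} (hx : Tendsto (fun L : ℕ => f x L / L) atTop (𝓝 0))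
    {ε : ℝ} (hε : 0 < ε) : ∀ᶠ p in atTop ×ˢ 𝓝 x, f p.2 p.1 ≤ ε * p.1 := by
  obtain ⟨l, hl, hl0⟩ : ∃ l : ℕ, f x l / l < ε / 2 ∧ l ≠ 0 :=
    ((hx.eventually (gt_mem_nhds (half_pos hε))).and (eventually_ne_atTop 0)).exists
  have hfl : f x l < ε / 2 * l := by rwa [div_lt_iff₀ (by positivity)] at hl
  set B := ∑ r ∈ range l, (|f x r| + 1)
  have hnear : ∀ᶠ y in 𝓝 x, f y l < ε / 2 * l ∧ ∀ r ∈ range l, f y r < B := by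
    refine ((hcont l).continuousAt.eventually_lt continuousAt_const hfl).and
      ((eventually_all_finset _).2 fun r hr =>
        (hcont r).continuousAt.eventually_lt continuousAt_const ?_)
    calc f x r < |f x r| + 1 := by linarith [le_abs_self (f x r)]
      _ ≤ B := single_le_sum (f := fun r => |f x r| + 1) (fun _ _ => by positivity) hr
  have hlarge : ∀ᶠ L : ℕ in atTop, B ≤ ε / 2 * L :=
    (tendsto_natCast_atTop_atTop.const_mul_atTop (half_pos hε)).eventually_ge_atTop B
  filter_upwards [hlarge.prod_mk hnear] with ⟨L, y⟩ ⟨hL, hyl, hyr⟩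
  have hdiv : ((L / l : ℕ) : ℝ) * l ≤ L := by exact_mod_cast Nat.div_mul_le_self L l
  calc f y L = f y (L / l * l + L % l) := by rw [Nat.div_add_mod']
    _ ≤ (L / l : ℕ) * f y l + f y (L % l) := (hsub y).apply_mul_add_le _ _ _
    _ ≤ (L / l : ℕ) * (ε / 2 * l) + B :=
        add_le_add (mul_le_mul_of_nonneg_left hyl.le (Nat.cast_nonneg _))
          (hyr _ (mem_range.2 (Nat.mod_lt _ (Nat.pos_of_ne_zero hl0)))).le
    _ ≤ ε / 2 * L + ε / 2 * L := by nlinarith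
    _ = ε * L := by ring

theorem eventually_forall_le_mul_of_subadditive [CompactSpace X]
    (hcont : ∀ L, Continuous fun x => f x L) (hsub : ∀ x, Subadditive (f x))
    (hlim : ∀ x, Tendsto (fun L : ℕ => f x L / L) atTop (𝓝 0)) {ε : ℝ} (hε : 0 < ε) :
    ∀ᶠ L in atTop, ∀ x, f x L ≤ ε * L := by
  have : ∀ᶠ p in atTop ×ˢ 𝓝ˢ Set.univ, f p.2 p.1 ≤ ε * p.1 :=
    isCompact_univ.mem_prod_nhdsSet_of_forall fun x _ =>
      eventually_le_mul_nhds_of_subadditive hcont hsub (hlim x) hε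
  exact this.curry.mono fun _ h x => h.self_of_nhdsSet x (Set.mem_univ x)

end UniformSubadditive

section Parseval

open ComplexConjugate

variable {E : Type*} [NormedAddCommGroup E] [InnerProductSpace ℂ E] {ζ : ℂ} {K : ℕ}

lemma IsPrimitiveRoot.sum_conj_pow_mul_pow (hζ : IsPrimitiveRoot ζ K) {a b : ℕ} (ha : a < K)
    (hb : b < K) :
    ∑ j ∈ range K, conj ((ζ ^ j) ^ a) * (ζ ^ j) ^ b = if a = b then (K : ℂ) else 0 := by
  have hK : K ≠ 0 := by omega
  have hnorm : ‖ζ ^ a‖ = 1 := by rw [norm_pow, hζ.norm'_eq_one hK, one_pow]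
  have hζa : ζ ^ a ≠ 0 := pow_ne_zero a (hζ.ne_zero hK)
  have hterm : ∀ j, conj ((ζ ^ j) ^ a) * (ζ ^ j) ^ b = ((ζ ^ a)⁻¹ * ζ ^ b) ^ j := fun j => by
    rw [← pow_mul, ← pow_mul, mul_comm j a, mul_comm j b, pow_mul, pow_mul, map_pow,
      ← Complex.inv_eq_conj hnorm, mul_pow]
  simp only [hterm]
  split_ifs with hab
  · subst hab
    simp [inv_mul_cancel₀ hζa]
  · have hne : (ζ ^ a)⁻¹ * ζ ^ b ≠ 1 := fun h =>
      hab (hζ.pow_inj ha hb ((inv_mul_eq_one₀ hζa).1 h))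
    rw [geom_sum_eq hne, mul_pow, inv_pow, ← pow_mul, ← pow_mul, mul_comm a, mul_comm b,
      pow_mul, pow_mul, hζ.pow_eq_one, one_pow, one_pow, inv_one, one_mul, sub_self, zero_div]

theorem IsPrimitiveRoot.sum_norm_sq_sum_pow_smul (hζ : IsPrimitiveRoot ζ K) {M : ℕ}
    (hM : M ≤ K) (v : ℕ → E) :
    ∑ j ∈ range K, ‖∑ n ∈ range M, (ζ ^ j) ^ n • v n‖ ^ 2 = K * ∑ n ∈ range M, ‖v n‖ ^ 2 := by
  apply Complex.ofReal_injective
  have hsq : ∀ w : E, (‖w‖ : ℂ) ^ 2 = ⟪w, w⟫_ℂ := fun w => (inner_self_eq_norm_sq_to_K w).symm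
  push_cast
  simp only [hsq, sum_inner, inner_sum, inner_smul_left, inner_smul_right, mul_sum]
  rw [sum_comm]
  refine sum_congr rfl fun a ha => ?_
  rw [sum_comm]
  have hcoef : ∀ b ∈ range M, ∑ j ∈ range K, (ζ ^ j) ^ a * (conj ((ζ ^ j) ^ b) * ⟪v b, v a⟫_ℂ)
      = if b = a then (K : ℂ) * ⟪v b, v a⟫_ℂ else 0 := by
    intro b hb
    simp_rw [mul_left_comm _ (conj _), ← mul_assoc, ← sum_mul,
      hζ.sum_conj_pow_mul_pow ((mem_range.1 hb).trans_le hM) ((mem_range.1 ha).trans_le hM),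
      ite_mul, zero_mul]
  rw [sum_congr rfl hcoef, sum_ite_eq', if_pos ha]

end Parseval

section Orbit

open ComplexConjugate

variable {E : Type*} [NormedAddCommGroup E] [InnerProductSpace ℂ E] {U : E →L[ℂ] E}

lemma norm_pow_apply_of_norm_map (hU : ∀ x, ‖U x‖ = ‖x‖) (n : ℕ) (x : E) :
    ‖(U ^ n) x‖ = ‖x‖ := by
  induction n with
  | zero => simp
  | succ n ih => rw [pow_succ', mul_apply_eq_comp, hU, ih]

lemma inner_orbit_add (hU : ∀ x, ‖U x‖ = ‖x‖) (h : E) (p r : ℕ) :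
    ⟪(U ^ p) h, (U ^ (p + r)) h⟫_ℂ = ⟪h, (U ^ r) h⟫_ℂ := by
  let V : E →ₗᵢ[ℂ] E := ⟨(U ^ p).toLinearMap, norm_pow_apply_of_norm_map hU p⟩
  rw [pow_add, mul_apply_eq_comp]
  exact V.inner_map_map h ((U ^ r) h)

variable (U) in
noncomputable def expSum (h : E) (z : ℂ) (L : ℕ) : E := ∑ n ∈ range L, z ^ n • (U ^ n) h

lemma expSum_add (h : E) (z : ℂ) (a b : ℕ) :
    expSum U h z (a + b) = expSum U h z a + z ^ a • (U ^ a) (expSum U h z b) := by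
  simp only [expSum, sum_range_add, map_sum, map_smul, smul_sum, smul_smul, ← pow_add,
    ← mul_apply_eq_comp]

lemma subadditive_norm_expSum (hU : ∀ x, ‖U x‖ = ‖x‖) (h : E) {z : ℂ} (hz : ‖z‖ = 1) :
    Subadditive fun L => ‖expSum U h z L‖ := fun a b => by
  show ‖_‖ ≤ ‖_‖ + ‖_‖
  rw [expSum_add]
  refine (norm_add_le _ _).trans_eq ?_
  rw [norm_smul, norm_pow, hz, one_pow, one_mul, norm_pow_apply_of_norm_map hU]

lemma norm_expSum_le (hU : ∀ x, ‖U x‖ = ‖x‖) (h : E) {z : ℂ} (hz : ‖z‖ = 1) (L : ℕ) :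
    ‖expSum U h z L‖ ≤ L * ‖h‖ :=
  (norm_sum_le _ _).trans_eq <| by
    simp only [norm_smul, norm_pow, hz, one_pow, one_mul, norm_pow_apply_of_norm_map hU,
      sum_const, card_range, nsmul_eq_mul]

lemma tendsto_norm_expSum_div [CompleteSpace E] (hU : ∀ x, ‖U x‖ = ‖x‖)
    (heig : ∀ (lam : ℂ) (x : E), ‖lam‖ = 1 → U x = lam • x → x = 0) (h : E) {z : ℂ}
    (hz : ‖z‖ = 1) : Tendsto (fun L : ℕ => ‖expSum U h z L‖ / L) atTop (𝓝 0) := by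
  have hz0 : z ≠ 0 := norm_ne_zero_iff.1 (by rw [hz]; exact one_ne_zero)
  set V : E →L[ℂ] E := z • U
  have hV : ‖V‖ ≤ 1 := V.opNorm_le_bound zero_le_one fun x => by
    simp [V, norm_smul, hz, hU]
  -- A fixed vector of `z • U` is an eigenvector of `U` for the unimodular eigenvalue `z⁻¹`.
  have hfix : ∀ w ∈ LinearMap.eqLocus (V : E →ₗ[ℂ] E) (1 : E →L[ℂ] E), w = 0 := by
    intro w hw
    refine heig z⁻¹ w (by rw [norm_inv, hz, inv_one]) ?_
    have hw : z • U w = w := hw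
    calc U w = z⁻¹ • (z • U w) := by rw [smul_smul, inv_mul_cancel₀ hz0, one_smul]
      _ = z⁻¹ • w := by rw [hw]
  have hlim := (V.tendsto_birkhoffAverage_orthogonalProjection hV h).norm
  rw [hfix _ (Submodule.coe_mem _), norm_zero] at hlim
  refine hlim.congr fun L => ?_
  have hiter : ∀ n, V^[n] h = z ^ n • (U ^ n) h := fun n => by
    rw [← FunLike.coe_pow_eq_iterate, smul_pow, smul_apply]
  simp only [birkhoffAverage, birkhoffSum, id, hiter, norm_smul, norm_inv, Complex.norm_natCast,
    expSum, div_eq_inv_mul]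

theorem eventually_forall_norm_expSum_le [CompleteSpace E] (hU : ∀ x, ‖U x‖ = ‖x‖)
    (heig : ∀ (lam : ℂ) (x : E), ‖lam‖ = 1 → U x = lam • x → x = 0) (h : E) {ε : ℝ}
    (hε : 0 < ε) : ∀ᶠ L in atTop, ∀ z : ℂ, ‖z‖ = 1 → ‖expSum U h z L‖ ≤ ε * L := by
  have hcont : ∀ L, Continuous fun z : Circle => ‖expSum U h z L‖ := fun L => by
    unfold expSum; fun_prop
  filter_upwards [eventually_forall_le_mul_of_subadditive hcont
    (fun z => subadditive_norm_expSum hU h z.norm_coe)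
    (fun z => tendsto_norm_expSum_div hU heig h z.norm_coe) hε] with L hL z hz
  exact hL ⟨z, by simpa [Submonoid.unitSphere] using hz⟩

lemma sum_norm_expSum_sq (hU : ∀ x, ‖U x‖ = ‖x‖) (h : E) {ζ : ℂ} {K M : ℕ}
    (hζ : IsPrimitiveRoot ζ K) (hM : M ≤ K) :
    ∑ j ∈ range K, ‖expSum U h (ζ ^ j) M‖ ^ 2 = K * (M * ‖h‖ ^ 2) := by
  simp only [expSum, hζ.sum_norm_sq_sum_pow_smul hM, norm_pow_apply_of_norm_map hU, sum_const,
    card_range, nsmul_eq_mul]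

variable (U) in
/-- The coefficients of the polynomial `z ^ M * ‖expSum U h z M‖ ^ 2` in `z`
(`pow_mul_norm_expSum_sq`). -/
noncomputable def gramDiagSum (h : E) (M a : ℕ) : ℂ :=
  ∑ p ∈ range M, ∑ q ∈ range M, if a + p = M + q then ⟪(U ^ p) h, (U ^ q) h⟫_ℂ else 0

lemma pow_mul_norm_expSum_sq (h : E) {z : ℂ} (hz : ‖z‖ = 1) (M : ℕ) :
    z ^ M * (‖expSum U h z M‖ : ℂ) ^ 2 = ∑ a ∈ range (2 * M), z ^ a * gramDiagSum U h M a := by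
  have hz0 : z ≠ 0 := norm_ne_zero_iff.1 (by rw [hz]; exact one_ne_zero)
  have hsq : ∀ w : E, (‖w‖ : ℂ) ^ 2 = ⟪w, w⟫_ℂ := fun w => (inner_self_eq_norm_sq_to_K w).symm
  rw [hsq]
  simp only [expSum, gramDiagSum, sum_inner, inner_sum, inner_smul_left, inner_smul_right,
    mul_sum]
  conv_lhs => rw [sum_comm]
  conv_rhs => rw [sum_comm]
  refine sum_congr rfl fun p hp => ?_
  conv_rhs => rw [sum_comm]
  refine sum_congr rfl fun q hq => ?_
  have hp' := mem_range.1 hp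
  have hq' := mem_range.1 hq
  have hterm : ∀ a ∈ range (2 * M), z ^ a * (if a + p = M + q then ⟪(U ^ p) h, (U ^ q) h⟫_ℂ
      else 0) = if M + q - p = a then z ^ a * ⟪(U ^ p) h, (U ^ q) h⟫_ℂ else 0 := by
    intro a _
    by_cases ha : a + p = M + q
    · rw [if_pos ha, if_pos (by omega)]
    · rw [if_neg ha, if_neg (by omega), mul_zero]
  rw [sum_congr rfl hterm, sum_ite_eq, if_pos (mem_range.2 (by omega)), ← mul_assoc,
    ← mul_assoc, pow_sub₀ _ hz0 (by omega), pow_add,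
    ← Complex.inv_eq_conj (by rw [norm_pow, hz, one_pow])]

lemma sum_norm_expSum_pow_four (h : E) {ζ : ℂ} {K M : ℕ} (hζ : IsPrimitiveRoot ζ K)
    (hM : 2 * M ≤ K) :
    ∑ j ∈ range K, ‖expSum U h (ζ ^ j) M‖ ^ 4 =
      K * ∑ a ∈ range (2 * M), ‖gramDiagSum U h M a‖ ^ 2 := by
  rw [← hζ.sum_norm_sq_sum_pow_smul hM]
  refine sum_congr rfl fun j hj => ?_
  have hz : ‖ζ ^ j‖ = 1 := by
    rw [norm_pow, hζ.norm'_eq_one (by have := mem_range.1 hj; omega), one_pow]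
  simp only [smul_eq_mul, ← pow_mul_norm_expSum_sq h hz]
  rw [norm_mul, norm_pow, hz, one_pow, one_mul, norm_pow, Complex.norm_real, Real.norm_eq_abs,
    abs_norm]
  ring

lemma gramDiagSum_add (hU : ∀ x, ‖U x‖ = ‖x‖) (h : E) (M r : ℕ) :
    gramDiagSum U h M (M + r) = (M - r : ℕ) * ⟪h, (U ^ r) h⟫_ℂ := by
  have hrow : ∀ p ∈ range M, (∑ q ∈ range M, if M + r + p = M + q then
      ⟪(U ^ p) h, (U ^ q) h⟫_ℂ else 0) = if p + r < M then ⟪h, (U ^ r) h⟫_ℂ else 0 := by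
    intro p _
    simp_rw [show ∀ q, (M + r + p = M + q) ↔ (p + r = q) from fun q => by omega, sum_ite_eq,
      mem_range, inner_orbit_add hU]
  rw [gramDiagSum, sum_congr rfl hrow, ← sum_filter, sum_const, nsmul_eq_mul]
  congr
  rw [← card_range (M - r)]
  congr 1
  ext p
  simp only [mem_filter, mem_range]
  omega

lemma sq_mul_sum_norm_inner_sq_le (hU : ∀ x, ‖U x‖ = ‖x‖) (h : E) (N : ℕ) :
    (N : ℝ) ^ 2 * ∑ r ∈ range N, ‖⟪h, (U ^ r) h⟫_ℂ‖ ^ 2 ≤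
      ∑ a ∈ range (2 * (2 * N)), ‖gramDiagSum U h (2 * N) a‖ ^ 2 := by
  rw [two_mul (2 * N), sum_range_add, mul_sum]
  calc ∑ r ∈ range N, (N : ℝ) ^ 2 * ‖⟪h, (U ^ r) h⟫_ℂ‖ ^ 2
      ≤ ∑ r ∈ range N, ‖gramDiagSum U h (2 * N) (2 * N + r)‖ ^ 2 := by
        refine sum_le_sum fun r hr => ?_
        rw [gramDiagSum_add hU, norm_mul, mul_pow, Complex.norm_natCast]
        have : N ≤ 2 * N - r := by have := mem_range.1 hr; omega
        gcongr
    _ ≤ ∑ r ∈ range (2 * N), ‖gramDiagSum U h (2 * N) (2 * N + r)‖ ^ 2 :=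
        sum_le_sum_of_subset_of_nonneg (range_subset_range.2 (by omega)) fun _ _ _ => by positivity
    _ ≤ _ := le_add_of_nonneg_left (sum_nonneg fun _ _ => by positivity)

lemma cesaro_norm_inner_sq_le (hU : ∀ x, ‖U x‖ = ‖x‖) (h : E) {N : ℕ} (hN : N ≠ 0) {δ : ℝ}
    (hδ : ∀ z : ℂ, ‖z‖ = 1 → ‖expSum U h z (2 * N)‖ ≤ δ * (2 * N : ℕ)) :
    (∑ r ∈ range N, ‖⟪h, (U ^ r) h⟫_ℂ‖ ^ 2) / N ≤ 8 * ‖h‖ ^ 3 * δ := by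
  set A := ∑ r ∈ range N, ‖⟪h, (U ^ r) h⟫_ℂ‖ ^ 2
  set M := 2 * N
  have hζ := Complex.isPrimitiveRoot_exp (4 * N) (by omega)
  set ζ := Complex.exp (2 * Real.pi * Complex.I / (4 * N : ℕ))
  have hsq : ∀ j, ‖expSum U h (ζ ^ j) M‖ ^ 2 ≤ δ * M ^ 2 * ‖h‖ := fun j => by
    have hz : ‖ζ ^ j‖ = 1 := by rw [norm_pow, hζ.norm'_eq_one (by omega), one_pow]
    have hδM := (norm_nonneg _).trans (hδ _ hz)
    calc ‖expSum U h (ζ ^ j) M‖ ^ 2 = ‖expSum U h (ζ ^ j) M‖ * ‖expSum U h (ζ ^ j) M‖ := sq _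
      _ ≤ (δ * M) * (M * ‖h‖) :=
        mul_le_mul (hδ _ hz) (norm_expSum_le hU h hz M) (norm_nonneg _) hδM
      _ = δ * M ^ 2 * ‖h‖ := by ring
  have hK : ((4 * N : ℕ) : ℝ) * (N ^ 2 * A) ≤ (4 * N : ℕ) * (δ * M ^ 2 * ‖h‖ * (M * ‖h‖ ^ 2)) :=
    calc ((4 * N : ℕ) : ℝ) * (N ^ 2 * A)
        ≤ (4 * N : ℕ) * ∑ a ∈ range (2 * M), ‖gramDiagSum U h M a‖ ^ 2 := by
          gcongr; exact sq_mul_sum_norm_inner_sq_le hU h N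
      _ = ∑ j ∈ range (4 * N), ‖expSum U h (ζ ^ j) M‖ ^ 4 :=
          (sum_norm_expSum_pow_four h hζ (by omega)).symm
      _ ≤ ∑ j ∈ range (4 * N), δ * M ^ 2 * ‖h‖ * ‖expSum U h (ζ ^ j) M‖ ^ 2 :=
          sum_le_sum fun j _ => by
            rw [show ‖expSum U h (ζ ^ j) M‖ ^ 4 = ‖expSum U h (ζ ^ j) M‖ ^ 2 *
              ‖expSum U h (ζ ^ j) M‖ ^ 2 by ring]
            exact mul_le_mul_of_nonneg_right (hsq j) (by positivity)
      _ = (4 * N : ℕ) * (δ * M ^ 2 * ‖h‖ * (M * ‖h‖ ^ 2)) := by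
          rw [← mul_sum, sum_norm_expSum_sq hU h hζ (by omega)]; ring
  have hN' : (0 : ℝ) < N := by positivity
  have hA : (N : ℝ) ^ 2 * A ≤ (N : ℝ) ^ 2 * (8 * ‖h‖ ^ 3 * δ * N) := by
    have := le_of_mul_le_mul_left hK (by positivity)
    simp only [M] at this
    push_cast at this
    linarith
  rw [div_le_iff₀ hN']
  exact le_of_mul_le_mul_left hA (by positivity)

theorem tendsto_cesaro_norm_inner_sq [CompleteSpace E] (hU : ∀ x, ‖U x‖ = ‖x‖)
    (heig : ∀ (lam : ℂ) (x : E), ‖lam‖ = 1 → U x = lam • x → x = 0) (h : E) :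
    Tendsto (fun N : ℕ => (∑ r ∈ range N, ‖⟪h, (U ^ r) h⟫_ℂ‖ ^ 2) / N) atTop (𝓝 0) := by
  refine tendsto_order.2 ⟨fun a ha => Eventually.of_forall fun N => ha.trans_le (by positivity),
    fun a ha => ?_⟩
  obtain ⟨δ, hδ, hδa⟩ := exists_pos_mul_lt ha (8 * ‖h‖ ^ 3)
  filter_upwards [(tendsto_id.const_mul_atTop' two_pos).eventually
    (eventually_forall_norm_expSum_le hU heig h hδ), eventually_ne_atTop 0] with N hN hN0
  exact (cesaro_norm_inner_sq_le hU h hN0 hN).trans_lt hδa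

end Orbit

theorem stmt15_general {H : Type*} [NormedAddCommGroup H] [InnerProductSpace ℂ H] [CompleteSpace H]
    (U : H →L[ℂ] H) (hiso : ∀ x : H, ‖U x‖ = ‖x‖)
    (heig : ∀ (lam : ℂ) (h : H), ‖lam‖ = 1 → U h = lam • h → h = 0) :
    ∀ h : H, ∃ S : Set ℕ, HasDensity S 1 ∧
      ∀ y : H, Tendsto (fun n : ℕ => ⟪y, (U ^ n) h⟫_ℂ)
        (atTop ⊓ Filter.principal S) (nhds 0) := by
  intro h
  obtain ⟨S, hS, hlim⟩ := exists_hasDensity_one_tendsto_zero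
    (b := fun m n => ‖⟪(U ^ m) h, (U ^ n) h⟫_ℂ‖ ^ 2) (fun _ _ => by positivity)
    fun m => tendsto_cesaro_of_shift m (fun _ => by positivity)
      (fun k => by simp only [inner_orbit_add hiso]) (tendsto_cesaro_norm_inner_sq hiso heig h)
  refine ⟨S, hS, tendsto_inner_zero_of_tendsto_inner_self
    (fun n => (norm_pow_apply_of_norm_map hiso n h).le) fun m => ?_⟩
  rw [tendsto_zero_iff_norm_tendsto_zero]
  simpa [Real.sqrt_sq (norm_nonneg _)] using (hlim m).sqrt

/-- A unitary operator on a Hilbert space without unimodular eigenvalues is almost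
weakly stable: every orbit converges weakly to 0 along a set of density 1. -/
theorem stmt15 {H : Type*} [NormedAddCommGroup H] [InnerProductSpace ℂ H] [CompleteSpace H]
    (U : H →L[ℂ] H) (hiso : ∀ x : H, ‖U x‖ = ‖x‖) (hsurj : Function.Surjective U)
    (heig : ∀ (lam : ℂ) (h : H), ‖lam‖ = 1 → U h = lam • h → h = 0) :
    ∀ h : H, ∃ S : Set ℕ, HasDensity S 1 ∧
      ∀ y : H, Tendsto (fun n : ℕ => ⟪y, (U ^ n) h⟫_ℂ)
        (atTop ⊓ Filter.principal S) (nhds 0) :=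
  stmt15_general U hiso heig
end
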